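/- In a monoidal dagger category with duals, the left involution s_L and the right involution s_R of a dagger Frobenius monoid (A, m, u) satisfy: (s_L)* = s_R and (s_R)* = s_L; (s_L)_* = s_L^{-1} and (s_R)_* = s_R^{-1}; and s_L^{-1} = (s_R)† and s_R^{-1} = (s_L)†. In particular s_L and s_R are isomorphisms. -/

import Mathlib

open CategoryTheory MonoidalCategory

namespace QAlg

variable {C : Type*} [Category C] [MonoidalCategory C]

/-- A dagger structure on a category. -/
structure Dagger (C : Type*) [Category C] where
  dag : ∀ {X Y : C}, (X ⟶ Y) → (Y ⟶ X)
  dag_dag : ∀ {X Y : C} (f : X ⟶ Y), dag (dag f) = f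
  dag_id : ∀ X : C, dag (𝟙 X) = 𝟙 X
  dag_comp : ∀ {X Y Z : C} (f : X ⟶ Y) (g : Y ⟶ Z), dag (f ≫ g) = dag g ≫ dag f

/-- A monoidal dagger category: the dagger is monoidal and the coherence
isomorphisms are unitary. -/
structure MonoidalDagger (C : Type*) [Category C] [MonoidalCategory C] extends Dagger C where
  dag_tensorHom : ∀ {W X Y Z : C} (f : W ⟶ X) (g : Y ⟶ Z), dag (f ⊗ₘ g) = dag f ⊗ₘ dag g
  dag_associator : ∀ X Y Z : C, dag (α_ X Y Z).hom = (α_ X Y Z).inv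
  dag_leftUnitor : ∀ X : C, dag (λ_ X).hom = (λ_ X).inv
  dag_rightUnitor : ∀ X : C, dag (ρ_ X).hom = (ρ_ X).inv

/-- A morphism is unitary if its dagger is its inverse. -/
def Dagger.IsUnitary (D : Dagger C) {X Y : C} (f : X ⟶ Y) : Prop :=
  f ≫ D.dag f = 𝟙 X ∧ D.dag f ≫ f = 𝟙 Y

/-- Assigned duals and left/right duality morphisms, compatible with the dagger
(the compatibility equations between the duality morphisms, but *not* yet the
condition `((-)^{*L})† = ((-)†)^{*L}`). -/
structure PreDuals (D : MonoidalDagger C) where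
  star : C → C
  ε : ∀ A : C, 𝟙_ C ⟶ star A ⊗ A
  η : ∀ A : C, A ⊗ star A ⟶ 𝟙_ C
  εR : ∀ A : C, 𝟙_ C ⟶ A ⊗ star A
  ηR : ∀ A : C, star A ⊗ A ⟶ 𝟙_ C
  triangle_left₁ : ∀ A : C,
    (ρ_ A).inv ≫ (A ◁ ε A) ≫ (α_ A (star A) A).inv ≫ (η A ▷ A) ≫ (λ_ A).hom = 𝟙 A
  triangle_left₂ : ∀ A : C,
    (λ_ (star A)).inv ≫ (ε A ▷ star A) ≫ (α_ (star A) A (star A)).hom ≫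
      (star A ◁ η A) ≫ (ρ_ (star A)).hom = 𝟙 (star A)
  triangle_right₁ : ∀ A : C,
    (λ_ A).inv ≫ (εR A ▷ A) ≫ (α_ A (star A) A).hom ≫ (A ◁ ηR A) ≫ (ρ_ A).hom = 𝟙 A
  triangle_right₂ : ∀ A : C,
    (ρ_ (star A)).inv ≫ (star A ◁ εR A) ≫ (α_ (star A) A (star A)).inv ≫
      (ηR A ▷ star A) ≫ (λ_ (star A)).hom = 𝟙 (star A)
  star_star : ∀ A : C, star (star A) = A
  star_tensor : ∀ A B : C, star (A ⊗ B) = star B ⊗ star A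
  star_unit : star (𝟙_ C) = 𝟙_ C
  ε_eq_dag_ηR : ∀ A : C, ε A = D.dag (ηR A)
  η_eq_dag_εR : ∀ A : C, η A = D.dag (εR A)
  ε_eq_dag_η_star : ∀ A : C,
    ε A = D.dag (η (star A)) ≫ (star A ◁ eqToHom (star_star A))
  ε_eq_εR_star : ∀ A : C,
    ε A = εR (star A) ≫ (star A ◁ eqToHom (star_star A))
  η_eq_dag_ε_star : ∀ A : C,
    η A = (eqToHom (star_star A).symm ▷ star A) ≫ D.dag (ε (star A))
  η_eq_ηR_star : ∀ A : C,
    η A = (eqToHom (star_star A).symm ▷ star A) ≫ ηR (star A)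

variable {D : MonoidalDagger C}

/-- The left duality functor on morphisms. -/
def PreDuals.starL (P : PreDuals D) {A B : C} (f : A ⟶ B) : P.star B ⟶ P.star A :=
  (λ_ (P.star B)).inv ≫ (P.ε A ▷ P.star B) ≫ (α_ (P.star A) A (P.star B)).hom ≫
    (P.star A ◁ (f ▷ P.star B)) ≫ (P.star A ◁ P.η B) ≫ (ρ_ (P.star A)).hom

/-- The right duality functor on morphisms. -/
def PreDuals.starR (P : PreDuals D) {A B : C} (f : A ⟶ B) : P.star B ⟶ P.star A :=
  (ρ_ (P.star B)).inv ≫ (P.star B ◁ P.εR A) ≫ (α_ (P.star B) A (P.star A)).inv ≫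
    ((P.star B ◁ f) ▷ P.star A) ≫ (P.ηR B ▷ P.star A) ≫ (λ_ (P.star A)).hom

/-- A monoidal dagger category with duals: additionally `((-)^{*L})† = ((-)†)^{*L}`. -/
structure Duals (D : MonoidalDagger C) extends PreDuals D where
  dag_starL : ∀ {A B : C} (f : A ⟶ B),
    D.dag (toPreDuals.starL f) = toPreDuals.starL (D.dag f)

/-- The conjugation functor `f ↦ f_* = (f^*)† = (f†)^*`. -/
def Duals.conj (P : Duals D) {A B : C} (f : A ⟶ B) : P.star A ⟶ P.star B :=
  D.dag (P.starL f)

/-- The abstract dimension of an object, `ε† ∘ ε`. -/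
def Duals.dim (P : Duals D) (A : C) : 𝟙_ C ⟶ 𝟙_ C :=
  P.ε A ≫ D.dag (P.ε A)

/-- Monoid data on an object. -/
structure MonoidOn (A : C) where
  m : A ⊗ A ⟶ A
  u : 𝟙_ C ⟶ A

/-- The monoid axioms. -/
def MonoidOn.IsMonoid {A : C} (M : MonoidOn A) : Prop :=
  ((M.u ▷ A) ≫ M.m = (λ_ A).hom) ∧ ((A ◁ M.u) ≫ M.m = (ρ_ A).hom) ∧
    ((M.m ▷ A) ≫ M.m = (α_ A A A).hom ≫ (A ◁ M.m) ≫ M.m)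

/-- The dagger Frobenius condition: the adjoint comonoid satisfies the
Frobenius law with the monoid. -/
def MonoidOn.IsDagFrobenius {A : C} (M : MonoidOn A) (D : MonoidalDagger C) : Prop :=
  ((D.dag M.m ▷ A) ≫ (α_ A A A).hom ≫ (A ◁ M.m) = M.m ≫ D.dag M.m) ∧
    ((A ◁ D.dag M.m) ≫ (α_ A A A).inv ≫ (M.m ▷ A) = M.m ≫ D.dag M.m)

/-- The canonical left involution of a dagger Frobenius monoid. -/
def Duals.sL (P : Duals D) {A : C} (M : MonoidOn A) : A ⟶ P.star A :=
  (ρ_ A).inv ≫ (A ◁ (P.ε (P.star A) ≫ (eqToHom (P.star_star A) ▷ P.star A))) ≫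
    (α_ A A (P.star A)).inv ≫ ((M.m ≫ D.dag M.u) ▷ P.star A) ≫ (λ_ (P.star A)).hom

/-- The canonical right involution of a dagger Frobenius monoid. -/
def Duals.sR (P : Duals D) {A : C} (M : MonoidOn A) : A ⟶ P.star A :=
  (λ_ A).inv ≫ (P.ε A ▷ A) ≫ (α_ (P.star A) A A).hom ≫
    (P.star A ◁ (M.m ≫ D.dag M.u)) ≫ (ρ_ (P.star A)).hom

/-- Multiplication of the conjugate monoid on `A*`. -/
def Duals.conjMul (P : Duals D) {A : C} (M : MonoidOn A) : P.star A ⊗ P.star A ⟶ P.star A :=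
  eqToHom (P.star_tensor A A).symm ≫ P.conj M.m

/-- Unit of the conjugate monoid on `A*`. -/
def Duals.conjUnit (P : Duals D) {A : C} (M : MonoidOn A) : 𝟙_ C ⟶ P.star A :=
  eqToHom P.star_unit.symm ≫ P.conj M.u

/-- `s : A ⟶ A*` makes the monoid `M` into an involution monoid: it is a monoid
homomorphism to the conjugate monoid and satisfies `s_* ∘ s = id` (via `A** = A`). -/
def Duals.IsInvolutionMonoid (P : Duals D) {A : C} (M : MonoidOn A) (s : A ⟶ P.star A) : Prop :=
  (M.m ≫ s = (s ⊗ₘ s) ≫ P.conjMul M) ∧ (M.u ≫ s = P.conjUnit M) ∧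
    (s ≫ P.conj s ≫ eqToHom (P.star_star A) = 𝟙 A)

/-- Monoid homomorphism property. -/
def IsMonoidHom {A B : C} (M : MonoidOn A) (N : MonoidOn B) (f : A ⟶ B) : Prop :=
  (M.m ≫ f = (f ⊗ₘ f) ≫ N.m) ∧ (M.u ≫ f = N.u)

/-- The endomorphism monoid `End(A)` on `A* ⊗ A`. -/
def Duals.endM (P : Duals D) (A : C) : MonoidOn (P.star A ⊗ A) where
  m := (α_ (P.star A) A (P.star A ⊗ A)).hom ≫ (P.star A ◁ (α_ A (P.star A) A).inv) ≫
    (P.star A ◁ (P.η A ▷ A)) ≫ (P.star A ◁ (λ_ A).hom)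
  u := P.ε A

/-! Both involutions transpose the Frobenius cap `m ≫ u†` through a duality cup, and their daggers
transpose the Frobenius cup `u ≫ m†` through a duality cap. A composite of two such transposes
straightens, by the snake equations of the duality and of the Frobenius self-duality, to the
identity; so `sR†` and `sL†` are inverse to `sL` and `sR`. Sliding a cap along a cup gives
`(sL)^* = sR`; functoriality of `(-)^*` and its compatibility with `†` then give `(sR)^* = sL`, and
the statements about `(-)_*` are the daggers of these. -/

omit [MonoidalCategory C] in
lemma Dagger.dag_eqToHom (D : Dagger C) {X Y : C} (h : X = Y) :
    D.dag (eqToHom h) = eqToHom h.symm := by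
  subst h
  exact D.dag_id X

namespace MonoidalDagger

variable (D : MonoidalDagger C)

lemma dag_whiskerLeft (X : C) {Y Z : C} (f : Y ⟶ Z) : D.dag (X ◁ f) = X ◁ D.dag f := by
  rw [← id_tensorHom, D.dag_tensorHom, D.dag_id, id_tensorHom]

lemma dag_whiskerRight {Y Z : C} (f : Y ⟶ Z) (X : C) : D.dag (f ▷ X) = D.dag f ▷ X := by
  rw [← tensorHom_id, D.dag_tensorHom, D.dag_id, tensorHom_id]

lemma dag_leftUnitor_inv (X : C) : D.dag (λ_ X).inv = (λ_ X).hom := by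
  rw [← D.dag_leftUnitor, D.dag_dag]

lemma dag_rightUnitor_inv (X : C) : D.dag (ρ_ X).inv = (ρ_ X).hom := by
  rw [← D.dag_rightUnitor, D.dag_dag]

lemma dag_associator_inv (X Y Z : C) : D.dag (α_ X Y Z).inv = (α_ X Y Z).hom := by
  rw [← D.dag_associator, D.dag_dag]

end MonoidalDagger

/- Transposition of a strand through a cup `q` and a cap `p`; `starL`, `sL` and `sR` are all of
this form. -/

def bendRight (A : C) {X Y : C} (q : 𝟙_ C ⟶ X ⊗ Y) (p : A ⊗ X ⟶ 𝟙_ C) : A ⟶ Y :=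
  (ρ_ A).inv ≫ (A ◁ q) ≫ (α_ A X Y).inv ≫ (p ▷ Y) ≫ (λ_ Y).hom

def bendLeft {A B : C} (Z : C) (q : 𝟙_ C ⟶ A ⊗ B) (p : B ⊗ Z ⟶ 𝟙_ C) : Z ⟶ A :=
  (λ_ Z).inv ≫ (q ▷ Z) ≫ (α_ A B Z).hom ≫ (A ◁ p) ≫ (ρ_ A).hom

lemma dag_bendRight (D : MonoidalDagger C) (A : C) {X Y : C}
    (q : 𝟙_ C ⟶ X ⊗ Y) (p : A ⊗ X ⟶ 𝟙_ C) :
    D.dag (bendRight A q p) = bendLeft Y (D.dag p) (D.dag q) := by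
  simp only [bendRight, bendLeft, D.dag_comp, D.dag_leftUnitor, D.dag_associator_inv,
    D.dag_rightUnitor_inv, D.dag_whiskerLeft, D.dag_whiskerRight, Category.assoc]

lemma dag_bendLeft (D : MonoidalDagger C) {A B : C} (Z : C)
    (q : 𝟙_ C ⟶ A ⊗ B) (p : B ⊗ Z ⟶ 𝟙_ C) :
    D.dag (bendLeft Z q p) = bendRight A (D.dag p) (D.dag q) := by
  simp only [bendRight, bendLeft, D.dag_comp, D.dag_rightUnitor, D.dag_associator,
    D.dag_leftUnitor_inv, D.dag_whiskerLeft, D.dag_whiskerRight, Category.assoc]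

lemma comp_bendRight {A A' X Y : C} (q : 𝟙_ C ⟶ X ⊗ Y) (p : A ⊗ X ⟶ 𝟙_ C) (g : A' ⟶ A) :
    g ≫ bendRight A q p = bendRight A' q ((g ▷ X) ≫ p) := by
  simp only [bendRight, comp_whiskerRight, Category.assoc]
  rw [rightUnitor_inv_naturality_assoc, ← whisker_exchange_assoc,
    associator_inv_naturality_left_assoc]

lemma bendRight_comp {A X Y Y' : C} (q : 𝟙_ C ⟶ X ⊗ Y) (p : A ⊗ X ⟶ 𝟙_ C) (f : Y ⟶ Y') :
    bendRight A q p ≫ f = bendRight A (q ≫ (X ◁ f)) p := by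
  simp only [bendRight, whiskerLeft_comp, Category.assoc]
  rw [← leftUnitor_naturality, ← whisker_exchange_assoc, ← associator_inv_naturality_right_assoc]

lemma bendRight_comp_whiskerRight {A X Z W : C} (q : 𝟙_ C ⟶ Z ⊗ W) (p : A ⊗ X ⟶ 𝟙_ C)
    (g : Z ⟶ X) : bendRight A (q ≫ (g ▷ W)) p = bendRight A q ((A ◁ g) ≫ p) := by
  simp only [bendRight, whiskerLeft_comp, comp_whiskerRight, Category.assoc]
  rw [associator_inv_naturality_middle_assoc]

lemma comp_bendLeft {A B Z Z' : C} (q : 𝟙_ C ⟶ A ⊗ B) (p : B ⊗ Z ⟶ 𝟙_ C) (f : Z' ⟶ Z) :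
    f ≫ bendLeft Z q p = bendLeft Z' q ((B ◁ f) ≫ p) := by
  simp only [bendLeft, whiskerLeft_comp, Category.assoc]
  rw [leftUnitor_inv_naturality_assoc, whisker_exchange_assoc, associator_naturality_right_assoc]

lemma bendLeft_comp {A A' B Z : C} (q : 𝟙_ C ⟶ A ⊗ B) (p : B ⊗ Z ⟶ 𝟙_ C) (g : A ⟶ A') :
    bendLeft Z q p ≫ g = bendLeft Z (q ≫ (g ▷ B)) p := by
  simp only [bendLeft, comp_whiskerRight, Category.assoc]
  rw [← rightUnitor_naturality, whisker_exchange_assoc, ← associator_naturality_left_assoc]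

lemma bendLeft_comp_whiskerLeft {A B B' Z : C} (q : 𝟙_ C ⟶ A ⊗ B') (p : B ⊗ Z ⟶ 𝟙_ C)
    (g : B' ⟶ B) : bendLeft Z (q ≫ (A ◁ g)) p = bendLeft Z q ((g ▷ Z) ≫ p) := by
  simp only [bendLeft, whiskerLeft_comp, comp_whiskerRight, Category.assoc]
  rw [associator_naturality_middle_assoc]

lemma cup_cup_comm {U V : C} (q : 𝟙_ C ⟶ U) (q' : 𝟙_ C ⟶ V) :
    q' ≫ (λ_ V).inv ≫ (q ▷ V) = q ≫ (ρ_ U).inv ≫ (U ◁ q') := by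
  rw [leftUnitor_inv_naturality_assoc, whisker_exchange, rightUnitor_inv_naturality_assoc,
    unitors_inv_equal]

lemma cap_cap_comm {U V : C} (p : U ⟶ 𝟙_ C) (p' : V ⟶ 𝟙_ C) :
    (p ▷ V) ≫ (λ_ V).hom ≫ p' = (U ◁ p') ≫ (ρ_ U).hom ≫ p := by
  rw [← leftUnitor_naturality, ← whisker_exchange_assoc, ← rightUnitor_naturality, unitors_equal]

lemma cup_whiskerLeft_bendRight {X Y Z W : C} (q : 𝟙_ C ⟶ X ⊗ Y) (q' : 𝟙_ C ⟶ Z ⊗ W)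
    (p : Y ⊗ Z ⟶ 𝟙_ C) :
    q ≫ (X ◁ bendRight Y q' p) = q' ≫ (bendLeft Z q p ▷ W) := by
  simp only [bendRight, bendLeft, whiskerLeft_comp, comp_whiskerRight]
  rw [whiskerLeft_rightUnitor_inv, leftUnitor_inv_whiskerRight]
  simp only [Category.assoc]
  rw [← associator_naturality_right_assoc, ← associator_inv_naturality_left_assoc,
    reassoc_of% cup_cup_comm q q', ← MonoidalCategory.triangle,
    associator_naturality_middle_assoc]
  monoidal

lemma bendRight_whiskerRight_comp {A X Y Z : C} (q : 𝟙_ C ⟶ X ⊗ Y) (p : A ⊗ X ⟶ 𝟙_ C)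
    (p' : Y ⊗ Z ⟶ 𝟙_ C) :
    (bendRight A q p ▷ Z) ≫ p' = (A ◁ bendLeft Z q p') ≫ p := by
  simp only [bendRight, bendLeft, whiskerLeft_comp, comp_whiskerRight, Category.assoc]
  rw [show (λ_ Y).hom ▷ Z = (α_ (𝟙_ C) Y Z).hom ≫ (λ_ (Y ⊗ Z)).hom by monoidal]
  simp only [Category.assoc]
  rw [associator_naturality_left_assoc, cap_cap_comm]
  rw [show (ρ_ (A ⊗ X)).hom = (α_ A X (𝟙_ C)).hom ≫ (A ◁ (ρ_ X).hom) by monoidal]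
  simp only [Category.assoc]
  rw [associator_naturality_right_assoc]
  rw [show A ◁ (λ_ Z).inv = ((ρ_ A).inv ▷ Z) ≫ (α_ A (𝟙_ C) Z).hom by monoidal]
  simp only [Category.assoc]
  rw [← associator_naturality_middle_assoc]
  monoidal

lemma bendRight_comp_bendRight {A X Y Z W : C} (q : 𝟙_ C ⟶ X ⊗ Y) (p : A ⊗ X ⟶ 𝟙_ C)
    (q' : 𝟙_ C ⟶ Z ⊗ W) (p' : Y ⊗ Z ⟶ 𝟙_ C) :
    bendRight A q p ≫ bendRight Y q' p' = bendRight A q' ((A ◁ bendLeft Z q p') ≫ p) := by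
  rw [bendRight_comp, cup_whiskerLeft_bendRight, ← bendRight_comp_whiskerRight]

lemma bendLeft_comp_bendLeft {A A' B B' Z : C} (q : 𝟙_ C ⟶ A ⊗ B) (p : B ⊗ Z ⟶ 𝟙_ C)
    (q' : 𝟙_ C ⟶ A' ⊗ B') (p' : B' ⊗ A ⟶ 𝟙_ C) :
    bendLeft Z q p ≫ bendLeft A q' p' = bendLeft Z q' ((bendRight B' q p' ▷ Z) ≫ p) := by
  rw [bendLeft_comp, ← cup_whiskerLeft_bendRight, bendLeft_comp_whiskerLeft]

namespace PreDuals

variable (P : PreDuals D)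

lemma dag_ε (A : C) : D.dag (P.ε A) = P.ηR A := by
  rw [P.ε_eq_dag_ηR, D.dag_dag]

lemma dag_η (A : C) : D.dag (P.η A) = P.εR A := by
  rw [P.η_eq_dag_εR, D.dag_dag]

lemma ε_star_comp_whiskerRight (A : C) :
    P.ε (P.star A) ≫ (eqToHom (P.star_star A) ▷ P.star A) = P.εR A := by
  have hηR : P.ηR (P.star A) = (eqToHom (P.star_star A) ▷ P.star A) ≫ P.η A := by
    simp [P.η_eq_ηR_star A]
  rw [P.ε_eq_dag_ηR, hηR, D.dag_comp, D.dag_whiskerRight, D.dag_eqToHom, P.dag_η]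
  simp

lemma η_star (A : C) :
    P.η (P.star A) = (P.star A ◁ eqToHom (P.star_star A)) ≫ P.ηR A := by
  have hηR : P.ηR A = (P.star A ◁ eqToHom (P.star_star A).symm) ≫ P.η (P.star A) := by
    rw [← P.dag_ε, P.ε_eq_dag_η_star A, D.dag_comp, D.dag_whiskerLeft, D.dag_eqToHom, D.dag_dag]
  simp [hηR]

lemma bendRight_ε_η (A : C) : bendRight A (P.ε A) (P.η A) = 𝟙 A := P.triangle_left₁ A

lemma bendLeft_ε_η (A : C) : bendLeft (P.star A) (P.ε A) (P.η A) = 𝟙 (P.star A) :=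
  P.triangle_left₂ A

lemma bendLeft_εR_ηR (A : C) : bendLeft A (P.εR A) (P.ηR A) = 𝟙 A := P.triangle_right₁ A

lemma bendRight_εR_ηR (A : C) : bendRight (P.star A) (P.εR A) (P.ηR A) = 𝟙 (P.star A) :=
  P.triangle_right₂ A

lemma starL_eq_bendLeft {A B : C} (f : A ⟶ B) :
    P.starL f = bendLeft (P.star B) (P.ε A) ((f ▷ P.star B) ≫ P.η B) := by
  simp only [starL, bendLeft, whiskerLeft_comp, Category.assoc]

lemma starL_id (A : C) : P.starL (𝟙 A) = 𝟙 (P.star A) := by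
  rw [P.starL_eq_bendLeft, id_whiskerRight, Category.id_comp, P.bendLeft_ε_η]

lemma starL_comp {A B E : C} (f : A ⟶ B) (g : B ⟶ E) :
    P.starL (f ≫ g) = P.starL g ≫ P.starL f := by
  rw [P.starL_eq_bendLeft f, P.starL_eq_bendLeft g, P.starL_eq_bendLeft (f ≫ g),
    bendLeft_comp_bendLeft, ← comp_bendRight, P.bendRight_ε_η, Category.comp_id,
    comp_whiskerRight, Category.assoc]

end PreDuals

section Frobenius

variable {A : C} {M : MonoidOn A}

/- The cup `u ≫ m†` and the cap `m ≫ u†` exhibit a dagger Frobenius monoid as self-dual. -/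

lemma bendRight_frobenius (hM : M.IsMonoid) (hF : M.IsDagFrobenius D) :
    bendRight A (M.u ≫ D.dag M.m) (M.m ≫ D.dag M.u) = 𝟙 A := by
  have hu : D.dag M.m ≫ (D.dag M.u ▷ A) = (λ_ A).inv := by
    simpa only [D.dag_comp, D.dag_whiskerRight, D.dag_leftUnitor] using congrArg D.dag hM.1
  simp only [bendRight, whiskerLeft_comp, comp_whiskerRight, Category.assoc]
  rw [reassoc_of% hF.2, reassoc_of% hM.2.1, Iso.inv_hom_id_assoc, reassoc_of% hu, Iso.inv_hom_id]

lemma bendLeft_frobenius (hM : M.IsMonoid) (hF : M.IsDagFrobenius D) :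
    bendLeft A (M.u ≫ D.dag M.m) (M.m ≫ D.dag M.u) = 𝟙 A := by
  have hu : D.dag M.m ≫ (A ◁ D.dag M.u) = (ρ_ A).inv := by
    simpa only [D.dag_comp, D.dag_whiskerLeft, D.dag_rightUnitor] using congrArg D.dag hM.2.1
  simp only [bendLeft, whiskerLeft_comp, comp_whiskerRight, Category.assoc]
  rw [reassoc_of% hF.1, reassoc_of% hM.1, Iso.inv_hom_id_assoc, reassoc_of% hu, Iso.inv_hom_id]

end Frobenius

namespace Duals

variable (P : Duals D) {A : C}

lemma sL_eq_bendRight (M : MonoidOn A) : P.sL M = bendRight A (P.εR A) (M.m ≫ D.dag M.u) := by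
  rw [sL, bendRight, P.ε_star_comp_whiskerRight]

lemma sR_eq_bendLeft (M : MonoidOn A) : P.sR M = bendLeft A (P.ε A) (M.m ≫ D.dag M.u) := rfl

lemma dag_sL (M : MonoidOn A) :
    D.dag (P.sL M) = bendLeft (P.star A) (M.u ≫ D.dag M.m) (P.η A) := by
  rw [P.sL_eq_bendRight, dag_bendRight, D.dag_comp, D.dag_dag, ← P.η_eq_dag_εR]

lemma dag_sR (M : MonoidOn A) :
    D.dag (P.sR M) = bendRight (P.star A) (M.u ≫ D.dag M.m) (P.ηR A) := by
  rw [P.sR_eq_bendLeft, dag_bendLeft, D.dag_comp, D.dag_dag, P.dag_ε]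

lemma starL_sL (M : MonoidOn A) : P.starL (P.sL M) = eqToHom (P.star_star A) ≫ P.sR M := by
  rw [P.starL_eq_bendLeft, P.η_star, ← whisker_exchange_assoc, ← comp_bendLeft,
    P.sL_eq_bendRight, bendRight_whiskerRight_comp, P.bendLeft_εR_ηR, whiskerLeft_id,
    Category.id_comp, P.sR_eq_bendLeft]

lemma conj_sL (M : MonoidOn A) :
    P.conj (P.sL M) = D.dag (P.sR M) ≫ eqToHom (P.star_star A).symm := by
  rw [conj, P.starL_sL, D.dag_comp, D.dag_eqToHom]

variable {M : MonoidOn A} (hM : M.IsMonoid) (hF : M.IsDagFrobenius D)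
include hM hF

lemma sL_comp_dag_sR : P.sL M ≫ D.dag (P.sR M) = 𝟙 A := by
  rw [P.sL_eq_bendRight, P.dag_sR, bendRight_comp_bendRight, P.bendLeft_εR_ηR, whiskerLeft_id,
    Category.id_comp, bendRight_frobenius hM hF]

lemma dag_sR_comp_sL : D.dag (P.sR M) ≫ P.sL M = 𝟙 (P.star A) := by
  rw [P.dag_sR, P.sL_eq_bendRight, bendRight_comp_bendRight, bendLeft_frobenius hM hF,
    whiskerLeft_id, Category.id_comp, P.bendRight_εR_ηR]

lemma sR_comp_dag_sL : P.sR M ≫ D.dag (P.sL M) = 𝟙 A := by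
  rw [P.sR_eq_bendLeft, P.dag_sL, bendLeft_comp_bendLeft, P.bendRight_ε_η, id_whiskerRight,
    Category.id_comp, bendLeft_frobenius hM hF]

lemma dag_sL_comp_sR : D.dag (P.sL M) ≫ P.sR M = 𝟙 (P.star A) := by
  rw [P.dag_sL, P.sR_eq_bendLeft, bendLeft_comp_bendLeft, bendRight_frobenius hM hF,
    id_whiskerRight, Category.id_comp, P.bendLeft_ε_η]

/- `starL` is a functor, so it sends the inverse `sR†` of `sL` to the inverse of
`starL sL = sR`; taking daggers with `dag_starL` gives `starL sR`. -/
lemma starL_sR : P.starL (P.sR M) = eqToHom (P.star_star A) ≫ P.sL M := by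
  have hinv : P.starL (D.dag (P.sR M)) = D.dag (P.sL M) ≫ eqToHom (P.star_star A).symm := by
    have hright : (eqToHom (P.star_star A) ≫ P.sR M) ≫ P.starL (D.dag (P.sR M)) = 𝟙 _ := by
      rw [← P.starL_sL, ← P.starL_comp, P.dag_sR_comp_sL hM hF, P.starL_id]
    calc P.starL (D.dag (P.sR M))
        = (D.dag (P.sL M) ≫ eqToHom (P.star_star A).symm) ≫
            (eqToHom (P.star_star A) ≫ P.sR M) ≫ P.starL (D.dag (P.sR M)) := by
          simp [reassoc_of% P.dag_sL_comp_sR hM hF]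
      _ = D.dag (P.sL M) ≫ eqToHom (P.star_star A).symm := by rw [hright, Category.comp_id]
  rw [← D.dag_dag (P.starL (P.sR M)), P.dag_starL, hinv, D.dag_comp, D.dag_eqToHom, D.dag_dag]

lemma conj_sR : P.conj (P.sR M) = D.dag (P.sL M) ≫ eqToHom (P.star_star A).symm := by
  rw [conj, P.starL_sR hM hF, D.dag_comp, D.dag_eqToHom]

end Duals

theorem stmt4 {C : Type*} [Category C] [MonoidalCategory C] {D : MonoidalDagger C}
    (P : Duals D) {A : C} (M : MonoidOn A) (hM : M.IsMonoid) (hF : M.IsDagFrobenius D) :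
    (P.starL (P.sL M) = eqToHom (P.star_star A) ≫ P.sR M) ∧
    (P.starL (P.sR M) = eqToHom (P.star_star A) ≫ P.sL M) ∧
    (P.sL M ≫ P.conj (P.sL M) ≫ eqToHom (P.star_star A) = 𝟙 A) ∧
    (P.conj (P.sL M) ≫ eqToHom (P.star_star A) ≫ P.sL M = 𝟙 (P.star A)) ∧
    (P.sR M ≫ P.conj (P.sR M) ≫ eqToHom (P.star_star A) = 𝟙 A) ∧
    (P.conj (P.sR M) ≫ eqToHom (P.star_star A) ≫ P.sR M = 𝟙 (P.star A)) ∧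
    (P.sL M ≫ D.dag (P.sR M) = 𝟙 A) ∧ (D.dag (P.sR M) ≫ P.sL M = 𝟙 (P.star A)) ∧
    (P.sR M ≫ D.dag (P.sL M) = 𝟙 A) ∧ (D.dag (P.sL M) ≫ P.sR M = 𝟙 (P.star A)) ∧
    IsIso (P.sL M) ∧ IsIso (P.sR M) := by
  have hLR := P.sL_comp_dag_sR hM hF
  have hRL' := P.dag_sR_comp_sL hM hF
  have hRL := P.sR_comp_dag_sL hM hF
  have hLR' := P.dag_sL_comp_sR hM hF
  refine ⟨P.starL_sL M, P.starL_sR hM hF, ?_, ?_, ?_, ?_, hLR, hRL', hRL, hLR',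
    ⟨_, hLR, hRL'⟩, ⟨_, hRL, hLR'⟩⟩ <;>
    simp [P.conj_sL, P.conj_sR hM hF, hLR, hRL, hRL', hLR']

end QAlg
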